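/- arXiv:math/0605257 — 2 statements merged into one kernel-verified Lean document; each statement's English description precedes it below -/
import Mathlib

section
/- Let R be a commutative ring in which 2 is invertible and 3 ≠ 0, and let G ⊆ R* be an even 2-maximal subgroup. If a, b, c ∈ G satisfy a + 2b = 3c, then a = b = c. -/
/-! If `a + 2b = 3c` then `a - c = 2(c - b)`, so 2-maximality gives `a = c` or `a = -c`.
The first case forces `b = c`. In the second `b = 2c`, so `u = b c⁻¹ ∈ G` has value `2`;
but then `u² - u = 2(u - 1)`, and 2-maximality applied once more gives `4 = ±2`,
i.e. `2 = 0` or `6 = 0`, both impossible when `2` is a unit and `3 ≠ 0`. -/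

def Subgroup.IsTwoMaximal {R : Type*} [CommRing R] (G : Subgroup Rˣ) : Prop :=
  ∀ a b c d : Rˣ, a ∈ G → b ∈ G → c ∈ G → d ∈ G →
    (a : R) - (b : R) = 2 * ((c : R) - (d : R)) → a = b ∨ a = -b

namespace Subgroup.IsTwoMaximal

variable {R : Type*} [CommRing R] {G : Subgroup Rˣ}

theorem val_ne_two (hG : G.IsTwoMaximal) (h2 : IsUnit (2 : R)) (h3 : (3 : R) ≠ 0)
    {u : Rˣ} (hu : u ∈ G) : (u : R) ≠ 2 := by
  intro hu2
  have hsq : ((u * u : Rˣ) : R) - u = 2 * ((u : R) - (1 : Rˣ)) := by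
    push_cast
    rw [hu2]
    norm_num
  rcases hG (u * u) u u 1 (G.mul_mem hu hu) hu hu G.one_mem hsq with h | h
  · have h4 : (2 : R) * 2 = 2 := by simpa [hu2] using congrArg Units.val h
    have h10 : (1 : R) = 0 := h2.mul_left_cancel (by linear_combination h4)
    exact h3 (by linear_combination 3 * h10)
  · have h4 : (2 : R) * 2 = -2 := by simpa [hu2] using congrArg Units.val h
    exact h3 (h2.mul_left_cancel (by linear_combination h4))

theorem val_ne_two_mul (hG : G.IsTwoMaximal) (h2 : IsUnit (2 : R)) (h3 : (3 : R) ≠ 0)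
    {b c : Rˣ} (hb : b ∈ G) (hc : c ∈ G) : (b : R) ≠ 2 * c := by
  intro hbc
  refine hG.val_ne_two h2 h3 (G.mul_mem hb (G.inv_mem hc)) ?_
  rw [Units.val_mul, hbc, mul_assoc, Units.mul_inv, mul_one]

end Subgroup.IsTwoMaximal

theorem two_maximal_a_add_two_b_eq_three_c_general
    (R : Type*) [CommRing R] (h2 : IsUnit (2 : R)) (h3 : (3 : R) ≠ 0)
    (G : Subgroup Rˣ)
    (hmax : ∀ a b c d : Rˣ, a ∈ G → b ∈ G → c ∈ G → d ∈ G →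
      (a : R) - (b : R) = 2 * ((c : R) - (d : R)) → a = b ∨ a = -b)
    (a b c : Rˣ) (ha : a ∈ G) (hb : b ∈ G) (hc : c ∈ G)
    (h : (a : R) + 2 * (b : R) = 3 * (c : R)) : a = b ∧ b = c := by
  have hG : G.IsTwoMaximal := hmax
  rcases hG a c c b ha hc hc hb (by linear_combination h) with rfl | rfl
  · have hba : b = a := Units.ext <| h2.mul_left_cancel (by linear_combination h)
    exact ⟨hba.symm, hba⟩
  · rw [Units.val_neg] at h
    exact absurd (h2.mul_left_cancel (by linear_combination h)) (hG.val_ne_two_mul h2 h3 hb hc)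

theorem two_maximal_a_add_two_b_eq_three_c
    (R : Type*) [CommRing R] (h2 : IsUnit (2 : R)) (h3 : (3 : R) ≠ 0)
    (G : Subgroup Rˣ) (heven : (-1 : Rˣ) ∈ G)
    (hmax : ∀ a b c d : Rˣ, a ∈ G → b ∈ G → c ∈ G → d ∈ G →
      (a : R) - (b : R) = 2 * ((c : R) - (d : R)) → a = b ∨ a = -b)
    (a b c : Rˣ) (ha : a ∈ G) (hb : b ∈ G) (hc : c ∈ G)
    (h : (a : R) + 2 * (b : R) = 3 * (c : R)) : a = b ∧ b = c :=
  two_maximal_a_add_two_b_eq_three_c_general R h2 h3 G hmax a b c ha hb hc h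
end

section
/- Let G ⊆ ℂ* be the group of k-th roots of unity with k even, and suppose a, b, c, d ∈ G satisfy a - b = 2(c - d) with a ≠ b and a ≠ -b. Then a contradiction follows; equivalently, any solution of a - b = 2(c - d) in G satisfies a = b (trivial) or a = -b with c - d = a (hexagonal). -/
/-!
For complex numbers of modulus one, `z̄ = z⁻¹`, so conjugating `a - b = 2 (c - d)` gives
`a * b = c * d` as soon as `a ≠ b`. Dividing `(a - b)² = 4 (c - d)²` by this yields, for the roots
of unity `u = a / b` and `v = c / d`, the relation `u + u⁻¹ + 6 = 4 (v + v⁻¹)`, i.e.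
`2 Re u + 6 = 8 Re v`. The relation is polynomial over `ℚ`, so it survives every Galois
conjugation `u, v ↦ u ^ t, v ^ t` with `t` coprime to `k`, and `Re (u ^ t) ≥ -1` forces
`Re (v ^ t) > 0` for all such `t`. But when the order `m` of `v` is neither `1` nor `6`, the
primitive `m`-th root `exp (2πit/m)` with `m/4 ≤ t ≤ 3m/4` and `t` coprime to `m` lies in the closed
left half-plane, and it is a Galois conjugate of `v`. Order `1` means `c = d`, hence `a = b`; a
primitive sixth root satisfies `v + v⁻¹ = 1`, so `u + u⁻¹ = -2` and `u = -1`.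
-/

open Complex ComplexConjugate Polynomial Real

theorem Nat.exists_coprime_le_four_mul_le {m : ℕ} (h2 : 2 ≤ m) (h6 : m ≠ 6) :
    ∃ t, t.Coprime m ∧ m ≤ 4 * t ∧ 4 * t ≤ 3 * m := by
  -- apart from `m = 2`, take `m = c + 2 * t` with `c ∈ {1, 2, 4}` and `t` odd if `c` is even,
  -- so that `gcd t m = gcd t c = 1`
  rcases Nat.even_or_odd' m with ⟨r, rfl | rfl⟩
  · rcases Nat.even_or_odd' r with ⟨q, rfl | rfl⟩
    · refine ⟨2 * q - 1, ?_, by omega, by omega⟩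
      rw [show 2 * (2 * q) = 2 + 2 * (2 * q - 1) by omega, coprime_add_mul_right_right,
        coprime_two_right]
      exact ⟨q - 1, by omega⟩
    · obtain rfl | hq := Nat.eq_zero_or_pos q
      · exact ⟨1, coprime_one_left _, by omega, by omega⟩
      refine ⟨2 * q - 1, ?_, by omega, by omega⟩
      rw [show 2 * (2 * q + 1) = 2 ^ 2 + 2 * (2 * q - 1) by omega, coprime_add_mul_right_right]
      exact Coprime.pow_right 2 (coprime_two_right.mpr ⟨q - 1, by omega⟩)
  · refine ⟨r, ?_, by omega, by omega⟩
    rw [add_comm, coprime_add_mul_right_right]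
    exact coprime_one_right r

theorem Nat.exists_coprime_modEq_of_dvd {k m s : ℕ} (hk : 0 < k) (hmk : m ∣ k)
    (hs : s.Coprime m) : ∃ t, t.Coprime k ∧ t ≡ s [MOD m] := by
  have : NeZero k := ⟨hk.ne'⟩
  obtain ⟨y, hy⟩ := ZMod.unitsMap_surjective hmk (ZMod.unitOfCoprime s hs)
  refine ⟨(y : ZMod k).val, ZMod.val_coe_unit_coprime y, (ZMod.natCast_eq_natCast_iff _ _ _).mp ?_⟩
  simpa [ZMod.unitsMap_def] using congrArg Units.val hy

theorem IsPrimitiveRoot.exists_coprime_pow_eq {R : Type*} [CommRing R] [IsDomain R] {k : ℕ}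
    (hk : 0 < k) {v w : R} (hv : v ^ k = 1) (hw : IsPrimitiveRoot w (orderOf v)) :
    ∃ t, t.Coprime k ∧ v ^ t = w := by
  have hfin : IsOfFinOrder v := isOfFinOrder_iff_pow_eq_one.mpr ⟨k, hk, hv⟩
  have hm : 0 < orderOf v := hfin.orderOf_pos
  have : NeZero (orderOf v) := ⟨hm.ne'⟩
  have hv' := IsPrimitiveRoot.orderOf v
  obtain ⟨s, -, rfl⟩ := hv'.eq_pow_of_pow_eq_one hw.pow_eq_one
  obtain ⟨t, htk, hts⟩ := Nat.exists_coprime_modEq_of_dvd hk (orderOf_dvd_of_pow_eq_one hv)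
    ((hv'.pow_iff_coprime hm s).mp hw)
  exact ⟨t, htk, hfin.pow_eq_pow_iff_modEq.mpr hts⟩

theorem IsPrimitiveRoot.aeval_pow_eq_zero_of_coprime {K : Type*} [Field K] [CharZero K] {ζ : K}
    {k t : ℕ} (hζ : IsPrimitiveRoot ζ k) (hk : 0 < k) (ht : t.Coprime k) {P : ℚ[X]}
    (hP : aeval ζ P = 0) : aeval (ζ ^ t) P = 0 := by
  have hmin : minpoly ℚ (ζ ^ t) = minpoly ℚ ζ := by
    rw [← cyclotomic_eq_minpoly_rat hζ hk, ← cyclotomic_eq_minpoly_rat (hζ.pow_of_coprime t ht) hk]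
  obtain ⟨Q, rfl⟩ := minpoly.dvd ℚ ζ hP
  rw [map_mul, ← hmin, minpoly.aeval, zero_mul]

theorem MvPolynomial.aeval_pow_eq_zero_of_pow_eq_one {σ : Type*} {k t : ℕ} (hk : 0 < k)
    (ht : t.Coprime k) {x : σ → ℂ} (hx : ∀ i, x i ^ k = 1) {F : MvPolynomial σ ℚ}
    (hF : aeval x F = 0) : aeval (fun i => x i ^ t) F = 0 := by
  obtain ⟨ζ, hζ⟩ : ∃ ζ : ℂ, IsPrimitiveRoot ζ k := ⟨_, isPrimitiveRoot_exp k hk.ne'⟩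
  have : NeZero k := ⟨hk.ne'⟩
  choose e he using fun i => (hζ.eq_pow_of_pow_eq_one (hx i)).imp fun _ => And.right
  -- substituting `X i ↦ X ^ e i` turns `F` into a one-variable polynomial with root `ζ`
  have hP (z : ℂ) : Polynomial.aeval z (aeval (fun i => (Polynomial.X : ℚ[X]) ^ e i) F) =
      aeval (fun i => z ^ e i) F := by
    rw [← AlgHom.comp_apply, comp_aeval]
    simp
  have hζt := hζ.aeval_pow_eq_zero_of_coprime hk ht (by rw [hP]; simpa [he] using hF)
  rw [hP] at hζt
  convert hζt using 3
  funext i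
  rw [← he i, ← pow_mul, ← pow_mul, mul_comm]

namespace Complex

theorem exists_isPrimitiveRoot_re_nonpos {m : ℕ} (h2 : 2 ≤ m) (h6 : m ≠ 6) :
    ∃ w : ℂ, IsPrimitiveRoot w m ∧ w.re ≤ 0 := by
  obtain ⟨t, ht, hlo, hhi⟩ := Nat.exists_coprime_le_four_mul_le h2 h6
  refine ⟨_, isPrimitiveRoot_exp_of_coprime t m (by omega) ht, ?_⟩
  have hm : (0 : ℝ) < m := by positivity
  rw [show 2 * π * I * (t / m) = ((2 * π * t / m : ℝ) : ℂ) * I by push_cast; ring,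
    exp_ofReal_mul_I_re]
  apply Real.cos_nonpos_of_pi_div_two_le_of_le
  · rw [le_div_iff₀ hm]
    nlinarith [mul_le_mul_of_nonneg_left (by exact_mod_cast hlo : (m : ℝ) ≤ 4 * t) pi_pos.le]
  · rw [div_le_iff₀ hm]
    nlinarith [mul_le_mul_of_nonneg_left (by exact_mod_cast hhi : 4 * (t : ℝ) ≤ 3 * m) pi_pos.le]

theorem exists_coprime_re_pow_nonpos {k : ℕ} (hk : 0 < k) {v : ℂ} (hv : v ^ k = 1)
    (h1 : v ≠ 1) (h6 : orderOf v ≠ 6) : ∃ t, t.Coprime k ∧ (v ^ t).re ≤ 0 := by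
  have hm : 0 < orderOf v := orderOf_pos_iff.mpr (isOfFinOrder_iff_pow_eq_one.mpr ⟨k, hk, hv⟩)
  have hm1 : orderOf v ≠ 1 := mt orderOf_eq_one_iff.mp h1
  obtain ⟨w, hw, hre⟩ := exists_isPrimitiveRoot_re_nonpos (by omega) h6
  obtain ⟨t, htk, hvt⟩ := hw.exists_coprime_pow_eq hk hv
  exact ⟨t, htk, hvt ▸ hre⟩

theorem mul_eq_mul_of_sub_eq_ofReal_mul_sub {a b c d : ℂ} (ha : ‖a‖ = 1) (hb : ‖b‖ = 1)
    (hc : ‖c‖ = 1) (hd : ‖d‖ = 1) {r : ℝ} (hab : a ≠ b) (h : a - b = r * (c - d)) :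
    a * b = c * d := by
  have hconj : a⁻¹ - b⁻¹ = r * (c⁻¹ - d⁻¹) := by
    simpa [inv_eq_conj, ha, hb, hc, hd] using congrArg conj h
  have ne_zero {z : ℂ} (hz : ‖z‖ = 1) : z ≠ 0 := norm_ne_zero_iff.mp (by simp [hz])
  field_simp [ne_zero ha, ne_zero hb, ne_zero hc, ne_zero hd] at hconj
  refine mul_left_cancel₀ (sub_ne_zero.mpr hab) ?_
  linear_combination hconj + a * b * h

theorem add_inv_add_six_eq_of_sub_eq_two_mul_sub {a b c d : ℂ} (ha : a ≠ 0) (hb : b ≠ 0)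
    (hc : c ≠ 0) (hd : d ≠ 0) (hmul : a * b = c * d) (h : a - b = 2 * (c - d)) :
    a / b + (a / b)⁻¹ + 6 = 4 * (c / d + (c / d)⁻¹) := by
  field_simp
  linear_combination (a - b + 2 * (c - d)) * c * d * h + (8 * c * d - 4 * (c ^ 2 + d ^ 2)) * hmul

theorem add_inv_add_six_eq_pow_of_coprime {k t : ℕ} (hk : 0 < k) (ht : t.Coprime k) {x y : ℂ}
    (hx : x ^ k = 1) (hy : y ^ k = 1) (h : x + x⁻¹ + 6 = 4 * (y + y⁻¹)) :
    x ^ t + (x ^ t)⁻¹ + 6 = 4 * (y ^ t + (y ^ t)⁻¹) := by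
  open MvPolynomial in
  let F : MvPolynomial (Fin 2) ℚ :=
    X 0 ^ 2 * X 1 + X 1 + 6 * X 0 * X 1 - 4 * X 0 * X 1 ^ 2 - 4 * X 0
  have hF {x y : ℂ} (hx : x ≠ 0) (hy : y ≠ 0) :
      MvPolynomial.aeval ![x, y] F = 0 ↔ x + x⁻¹ + 6 = 4 * (y + y⁻¹) := by
    have : MvPolynomial.aeval ![x, y] F = x * y * (x + x⁻¹ + 6 - 4 * (y + y⁻¹)) := by
      simp only [F, map_add, map_sub, map_mul, map_pow, map_ofNat, MvPolynomial.aeval_X,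
        Matrix.cons_val_zero, Matrix.cons_val_one, Matrix.cons_val_fin_one]
      field_simp
      ring
    rw [this, mul_eq_zero, mul_eq_zero, sub_eq_zero]
    simp [hx, hy]
  have ne_zero {z : ℂ} (hz : z ^ k = 1) : z ≠ 0 := by rintro rfl; simp [hk.ne'] at hz
  rw [← hF (ne_zero hx) (ne_zero hy)] at h
  rw [← hF (pow_ne_zero t (ne_zero hx)) (pow_ne_zero t (ne_zero hy))]
  have hxy : ∀ i, ![x, y] i ^ k = 1 := Fin.forall_fin_two.mpr ⟨hx, hy⟩
  convert MvPolynomial.aeval_pow_eq_zero_of_pow_eq_one hk ht hxy h using 3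
  funext i
  fin_cases i <;> rfl

theorem re_pos_of_add_inv_add_six_eq {x y : ℂ} (hx : ‖x‖ = 1) (hy : ‖y‖ = 1)
    (h : x + x⁻¹ + 6 = 4 * (y + y⁻¹)) : 0 < y.re := by
  rw [inv_eq_conj hx, inv_eq_conj hy, add_conj, add_conj] at h
  have hre : 2 * x.re + 6 = 4 * (2 * y.re) := by exact_mod_cast h
  linarith [neg_abs_le x.re, abs_re_le_norm x]

theorem eq_neg_one_of_add_inv_add_six_eq {x y : ℂ} (hy : IsPrimitiveRoot y 6) (hx : x ≠ 0)
    (h : x + x⁻¹ + 6 = 4 * (y + y⁻¹)) : x = -1 := by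
  have hy0 : y ≠ 0 := hy.ne_zero (by norm_num)
  have hy6 : y ^ 2 - y + 1 = 0 := by
    simpa [cyclotomic_six] using hy.isRoot_cyclotomic (by norm_num)
  have hsq : y * (x + 1) ^ 2 = 0 := by
    field_simp at h
    linear_combination h + 4 * x * hy6
  have hx1 : (x + 1) ^ 2 = 0 := (mul_eq_zero.mp hsq).resolve_left hy0
  exact eq_neg_of_add_eq_zero_left (pow_eq_zero_iff two_ne_zero |>.mp hx1)

end Complex

theorem roots_of_unity_solutions_trivial_or_hexagonal_general
    (k : ℕ) (hk : 0 < k)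
    (a b c d : ℂ) (ha : a ^ k = 1) (hb : b ^ k = 1) (hc : c ^ k = 1) (hd : d ^ k = 1)
    (h : a - b = 2 * (c - d)) : a = b ∨ (a = -b ∧ c - d = a) := by
  rcases eq_or_ne a b with hab | hab
  · exact .inl hab
  have hcd : c ≠ d := by rintro rfl; simp [sub_eq_zero, hab] at h
  have hnorm {z : ℂ} (hz : z ^ k = 1) : ‖z‖ = 1 := norm_eq_one_of_pow_eq_one hz hk.ne'
  have hne {z : ℂ} (hz : z ^ k = 1) : z ≠ 0 := norm_ne_zero_iff.mp (by simp [hnorm hz])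
  have hmul : a * b = c * d := mul_eq_mul_of_sub_eq_ofReal_mul_sub (r := 2) (hnorm ha) (hnorm hb)
    (hnorm hc) (hnorm hd) hab (by exact_mod_cast h)
  have hrel := add_inv_add_six_eq_of_sub_eq_two_mul_sub (hne ha) (hne hb) (hne hc) (hne hd) hmul h
  by_cases h6 : orderOf (c / d) = 6
  · have hab' : a = -b := by
      have := eq_neg_one_of_add_inv_add_six_eq (h6 ▸ IsPrimitiveRoot.orderOf (c / d))
        (div_ne_zero (hne ha) (hne hb)) hrel
      rwa [div_eq_iff (hne hb), neg_one_mul] at this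
    exact .inr ⟨hab', by linear_combination -h / 2 - hab' / 2⟩
  · have hu : (a / b) ^ k = 1 := by rw [div_pow, ha, hb, div_one]
    have hv : (c / d) ^ k = 1 := by rw [div_pow, hc, hd, div_one]
    obtain ⟨t, ht, hre⟩ := exists_coprime_re_pow_nonpos hk hv (div_ne_one_of_ne hcd) h6
    have hpos := re_pos_of_add_inv_add_six_eq (by simp [hnorm ha, hnorm hb])
      (by simp [hnorm hc, hnorm hd]) (add_inv_add_six_eq_pow_of_coprime hk ht hu hv hrel)
    exact absurd hre hpos.not_ge

theorem roots_of_unity_solutions_trivial_or_hexagonal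
    (k : ℕ) (hk : 0 < k) (hke : Even k)
    (a b c d : ℂ) (ha : a ^ k = 1) (hb : b ^ k = 1) (hc : c ^ k = 1) (hd : d ^ k = 1)
    (h : a - b = 2 * (c - d)) : a = b ∨ (a = -b ∧ c - d = a) :=
  roots_of_unity_solutions_trivial_or_hexagonal_general k hk a b c d ha hb hc hd h
end
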